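/- arXiv:2408.01328 — 4 statements merged into one kernel-verified Lean document; each statement's English description precedes it below -/
import Mathlib

section
/- A prismatic graph G contains two vertex-disjoint triangles if and only if there is no single vertex meeting every triangle of G (i.e., G has no hitting set of size 1). -/
/-- Exactly one of three propositions holds. -/
def ExactlyOne (p q r : Prop) : Prop :=
  (p ∧ ¬q ∧ ¬r) ∨ (¬p ∧ q ∧ ¬r) ∨ (¬p ∧ ¬q ∧ r)

/-- `a`, `b`, `c` form a triangle of `G` (three pairwise adjacent vertices). -/
def SimpleGraph.IsTriangleV {V : Type*} (G : SimpleGraph V) (a b c : V) : Prop :=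
  G.Adj a b ∧ G.Adj a c ∧ G.Adj b c

/-- `G` is prismatic: every vertex outside a triangle has exactly one neighbor in it. -/
def SimpleGraph.Prismatic {V : Type*} (G : SimpleGraph V) : Prop :=
  ∀ a b c v : V, G.IsTriangleV a b c → v ≠ a → v ≠ b → v ≠ c →
    ExactlyOne (G.Adj v a) (G.Adj v b) (G.Adj v c)

section Aux

variable {V : Type*} {G : SimpleGraph V}

/-- A vertex outside a triangle cannot be adjacent to two distinct vertices of it. -/
lemma atMostOne (hG : G.Prismatic) {a b c v u w : V} (ht : G.IsTriangleV a b c)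
    (hva : v ≠ a) (hvb : v ≠ b) (hvc : v ≠ c)
    (hu : u = a ∨ u = b ∨ u = c) (hw : w = a ∨ w = b ∨ w = c) (huw : u ≠ w)
    (h1 : G.Adj v u) (h2 : G.Adj v w) : False := by
  have h := hG a b c v ht hva hvb hvc
  unfold ExactlyOne at h
  rcases hu with rfl | rfl | rfl <;> rcases hw with rfl | rfl | rfl <;> tauto

lemma tri_norm {d e f p : V} (h : G.IsTriangleV d e f) (hp : p = d ∨ p = e ∨ p = f) :
    ∃ x y, G.IsTriangleV p x y ∧ ∀ z : V, (z = d ∨ z = e ∨ z = f) ↔ (z = p ∨ z = x ∨ z = y) := by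
  obtain ⟨h1, h2, h3⟩ := h
  rcases hp with rfl | rfl | rfl
  · exact ⟨e, f, ⟨h1, h2, h3⟩, fun z => by tauto⟩
  · exact ⟨d, f, ⟨h1.symm, h3, h2⟩, fun z => by tauto⟩
  · exact ⟨d, e, ⟨h2.symm, h3.symm, h1⟩, fun z => by tauto⟩

lemma tri_swap {p x y : V} (h : G.IsTriangleV p x y) : G.IsTriangleV p y x :=
  ⟨h.2.1, h.1, h.2.2.symm⟩

/-- If a triangle misses `v ∈ {a,b,c}` but meets `{a,b,c}`, it meets it in exactly one
vertex. -/
lemma missOne (hG : G.Prismatic) {a b c d e f v : V} (ht : G.IsTriangleV a b c)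
    (ht' : G.IsTriangleV d e f) (hv : v = a ∨ v = b ∨ v = c)
    (hd : d ≠ v) (he : e ≠ v) (hf : f ≠ v)
    (hmeet : ∃ w : V, (w = a ∨ w = b ∨ w = c) ∧ (w = d ∨ w = e ∨ w = f)) :
    ∃ p x y, (p = a ∨ p = b ∨ p = c) ∧ p ≠ v ∧ G.IsTriangleV p x y ∧
      (∀ z : V, (z = d ∨ z = e ∨ z = f) ↔ (z = p ∨ z = x ∨ z = y)) ∧
      ¬(x = a ∨ x = b ∨ x = c) ∧ ¬(y = a ∨ y = b ∨ y = c) := by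
  obtain ⟨w, hwT, hwT'⟩ := hmeet
  have hwv : w ≠ v := by rcases hwT' with rfl | rfl | rfl <;> assumption
  obtain ⟨x, y, htw, hperm⟩ := tri_norm ht' hwT'
  by_cases hx : x = a ∨ x = b ∨ x = c
  · -- then y must also be in the triangle, pigeonhole contradiction
    have hxw : x ≠ w := (htw.1.symm).ne
    have hy : y = a ∨ y = b ∨ y = c := by
      by_contra hy
      push_neg at hy
      exact atMostOne hG ht hy.1 hy.2.1 hy.2.2 hwT hx hxw.symm htw.2.1.symm htw.2.2.symm
    have hxv : x ≠ v := by
      have : x = d ∨ x = e ∨ x = f := (hperm x).mpr (Or.inr (Or.inl rfl))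
      rcases this with rfl | rfl | rfl <;> assumption
    have hyv : y ≠ v := by
      have : y = d ∨ y = e ∨ y = f := (hperm y).mpr (Or.inr (Or.inr rfl))
      rcases this with rfl | rfl | rfl <;> assumption
    have hwx : w ≠ x := htw.1.ne
    have hwy : w ≠ y := htw.2.1.ne
    have hxy : x ≠ y := htw.2.2.ne
    exfalso
    rcases hv with rfl | rfl | rfl <;>
      rcases hwT with rfl | rfl | rfl <;>
      rcases hx with rfl | rfl | rfl <;>
      rcases hy with rfl | rfl | rfl <;> simp_all
  · by_cases hy : y = a ∨ y = b ∨ y = c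
    · -- x adjacent to two triangle vertices: contradiction
      exfalso
      push_neg at hx
      have hwy : w ≠ y := htw.2.1.ne
      exact atMostOne hG ht hx.1 hx.2.1 hx.2.2 hwT hy hwy htw.1.symm htw.2.2
    · exact ⟨w, x, y, hwT, hwv, htw, hperm, hx, hy⟩

/-- Two triangles each meeting the triangle `a b c` in a single, distinct vertex
are vertex-disjoint. -/
lemma disjPair (hG : G.Prismatic) {a b c p x y q u w : V} (ht : G.IsTriangleV a b c)
    (h1 : G.IsTriangleV p x y) (h2 : G.IsTriangleV q u w)
    (hp : p = a ∨ p = b ∨ p = c) (hq : q = a ∨ q = b ∨ q = c) (hpq : p ≠ q)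
    (hx : ¬(x = a ∨ x = b ∨ x = c)) (hy : ¬(y = a ∨ y = b ∨ y = c))
    (hu : ¬(u = a ∨ u = b ∨ u = c)) (hw : ¬(w = a ∨ w = b ∨ w = c)) :
    ({p, x, y} : Set V) ∩ ({q, u, w} : Set V) = ∅ := by
  ext z
  simp only [Set.mem_inter_iff, Set.mem_insert_iff, Set.mem_singleton_iff,
    Set.mem_empty_iff_false, iff_false, not_and]
  push_neg at hx hy hu hw
  rintro (rfl | rfl | rfl) (h' | h' | h')
  · exact hpq h'
  · subst h'; tauto
  · subst h'; tauto
  · subst h'; tauto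
  · subst h'
    exact atMostOne hG ht hx.1 hx.2.1 hx.2.2 hp hq hpq h1.1.symm h2.1.symm
  · subst h'
    exact atMostOne hG ht hx.1 hx.2.1 hx.2.2 hp hq hpq h1.1.symm h2.2.1.symm
  · subst h'; tauto
  · subst h'
    exact atMostOne hG ht hy.1 hy.2.1 hy.2.2 hp hq hpq h1.2.1.symm h2.1.symm
  · subst h'
    exact atMostOne hG ht hy.1 hy.2.1 hy.2.2 hp hq hpq h1.2.1.symm h2.2.1.symm

end Aux

/-- A prismatic graph contains two vertex-disjoint triangles iff it has no hitting
set of its triangles of size at most 1. -/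
theorem stmt1 {V : Type*} (G : SimpleGraph V) (hG : G.Prismatic) :
    (∃ a b c d e f : V, G.IsTriangleV a b c ∧ G.IsTriangleV d e f ∧
        ({a, b, c} : Set V) ∩ ({d, e, f} : Set V) = ∅) ↔
      ¬ ∃ S : Finset V, S.card ≤ 1 ∧
        ∀ a b c : V, G.IsTriangleV a b c → (a ∈ S ∨ b ∈ S ∨ c ∈ S) := by
  constructor
  · rintro ⟨a, b, c, d, e, f, h1, h2, hdisj⟩ ⟨S, hcard, hhit⟩
    have hS := Finset.card_le_one.mp hcard
    obtain hw1 := hhit a b c h1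
    obtain hw2 := hhit d e f h2
    obtain ⟨w1, hw1S, hw1m⟩ : ∃ w, w ∈ S ∧ (w = a ∨ w = b ∨ w = c) := by
      rcases hw1 with h | h | h
      exacts [⟨a, h, Or.inl rfl⟩, ⟨b, h, Or.inr (Or.inl rfl)⟩, ⟨c, h, Or.inr (Or.inr rfl)⟩]
    obtain ⟨w2, hw2S, hw2m⟩ : ∃ w, w ∈ S ∧ (w = d ∨ w = e ∨ w = f) := by
      rcases hw2 with h | h | h
      exacts [⟨d, h, Or.inl rfl⟩, ⟨e, h, Or.inr (Or.inl rfl)⟩, ⟨f, h, Or.inr (Or.inr rfl)⟩]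
    have hww : w1 = w2 := hS _ hw1S _ hw2S
    subst hww
    have : w1 ∈ ({a, b, c} : Set V) ∩ ({d, e, f} : Set V) := by
      simp only [Set.mem_inter_iff, Set.mem_insert_iff, Set.mem_singleton_iff]
      exact ⟨hw1m, hw2m⟩
    rw [hdisj] at this
    exact this
  · intro hnS
    by_contra hnopair
    apply hnS
    by_cases htri : ∃ a b c : V, G.IsTriangleV a b c
    · obtain ⟨a, b, c, ht⟩ := htri
      have claim : ∃ v : V, (v = a ∨ v = b ∨ v = c) ∧
          ∀ d e f : V, G.IsTriangleV d e f → (d = v ∨ e = v ∨ f = v) := by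
        by_contra hcl
        push_neg at hcl
        have key : ∀ v : V, v = a ∨ v = b ∨ v = c →
            ∃ p x y, (p = a ∨ p = b ∨ p = c) ∧ p ≠ v ∧ G.IsTriangleV p x y ∧
              ¬(x = a ∨ x = b ∨ x = c) ∧ ¬(y = a ∨ y = b ∨ y = c) := by
          intro v hv
          obtain ⟨d, e, f, ht', hmiss⟩ := hcl v hv
          obtain ⟨hm1, hm2, hm3⟩ : d ≠ v ∧ e ≠ v ∧ f ≠ v := by tauto
          have hmeet : ∃ w : V, (w = a ∨ w = b ∨ w = c) ∧ (w = d ∨ w = e ∨ w = f) := by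
            by_contra hno
            push_neg at hno
            apply hnopair
            refine ⟨a, b, c, d, e, f, ht, ht', ?_⟩
            ext z
            simp only [Set.mem_inter_iff, Set.mem_insert_iff, Set.mem_singleton_iff,
              Set.mem_empty_iff_false, iff_false, not_and]
            intro hz1 hz2
            rcases hz2 with rfl | rfl | rfl
            · exact (hno z hz1).1 rfl
            · exact (hno z hz1).2.1 rfl
            · exact (hno z hz1).2.2 rfl
          obtain ⟨p, x, y, hpm, hpv, htp, _, hxn, hyn⟩ :=
            missOne hG ht ht' hv hm1 hm2 hm3 hmeet
          exact ⟨p, x, y, hpm, hpv, htp, hxn, hyn⟩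
        obtain ⟨p₁, x₁, y₁, hp₁, hp₁a, ht₁, hx₁, hy₁⟩ := key a (Or.inl rfl)
        obtain ⟨p₂, x₂, y₂, hp₂, hp₂b, ht₂, hx₂, hy₂⟩ := key b (Or.inr (Or.inl rfl))
        obtain ⟨p₃, x₃, y₃, hp₃, hp₃c, ht₃, hx₃, hy₃⟩ := key c (Or.inr (Or.inr rfl))
        by_cases h12 : p₁ = p₂
        · have hp₁c : p₁ = c := by
            subst h12
            rcases hp₁ with rfl | rfl | rfl
            · exact absurd rfl hp₁a
            · exact absurd rfl hp₂b
            · rfl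
          have h13 : p₁ ≠ p₃ := by
            subst hp₁c
            exact fun h => hp₃c h.symm
          exact hnopair ⟨p₁, x₁, y₁, p₃, x₃, y₃, ht₁, ht₃,
            disjPair hG ht ht₁ ht₃ hp₁ hp₃ h13 hx₁ hy₁ hx₃ hy₃⟩
        · exact hnopair ⟨p₁, x₁, y₁, p₂, x₂, y₂, ht₁, ht₂,
            disjPair hG ht ht₁ ht₂ hp₁ hp₂ h12 hx₁ hy₁ hx₂ hy₂⟩
      obtain ⟨v, _, hv⟩ := claim
      refine ⟨{v}, by simp, fun d e f htf => ?_⟩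
      simpa [eq_comm] using hv d e f htf
    · push_neg at htri
      exact ⟨∅, by simp, fun d e f htf => absurd htf (htri d e f)⟩
end

section
/- A graph G is antiprismatic (its complement is prismatic) if and only if G is {K_{1,3}, 2K_1+K_2, 4K_1}-free. -/
/-- A graph is antiprismatic (its complement is prismatic) iff it is
{K_{1,3}, 2K_1+K_2, 4K_1}-free. -/
theorem stmt3 {V : Type*} (G : SimpleGraph V) :
    Gᶜ.Prismatic ↔
      ((¬ ∃ x a b c : V, G.Adj x a ∧ G.Adj x b ∧ G.Adj x c ∧
          a ≠ b ∧ a ≠ c ∧ b ≠ c ∧ ¬G.Adj a b ∧ ¬G.Adj a c ∧ ¬G.Adj b c) ∧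
       (¬ ∃ a b c d : V, G.Adj a b ∧
          c ≠ a ∧ c ≠ b ∧ d ≠ a ∧ d ≠ b ∧ c ≠ d ∧
          ¬G.Adj c d ∧ ¬G.Adj c a ∧ ¬G.Adj c b ∧ ¬G.Adj d a ∧ ¬G.Adj d b) ∧
       (¬ ∃ a b c d : V, a ≠ b ∧ a ≠ c ∧ a ≠ d ∧ b ≠ c ∧ b ≠ d ∧ c ≠ d ∧
          ¬G.Adj a b ∧ ¬G.Adj a c ∧ ¬G.Adj a d ∧
          ¬G.Adj b c ∧ ¬G.Adj b d ∧ ¬G.Adj c d)) := by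
  constructor
  · intro h
    refine ⟨?_, ?_, ?_⟩
    · rintro ⟨x, a, b, c, xa, xb, xc, hab, hac, hbc, nab, nac, nbc⟩
      have ht : Gᶜ.IsTriangleV a b c := ⟨⟨hab, nab⟩, ⟨hac, nac⟩, ⟨hbc, nbc⟩⟩
      have := h a b c x ht (G.ne_of_adj xa) (G.ne_of_adj xb) (G.ne_of_adj xc)
      simp only [ExactlyOne, SimpleGraph.compl_adj] at this
      tauto
    · rintro ⟨a, b, c, d, hab, hca, hcb, hda, hdb, hcd, ncd, nca, ncb, nda, ndb⟩
      have ht : Gᶜ.IsTriangleV c d a := ⟨⟨hcd, ncd⟩, ⟨hca, nca⟩, ⟨hda, nda⟩⟩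
      have := h c d a b ht hcb.symm hdb.symm (G.ne_of_adj hab).symm
      simp only [ExactlyOne, SimpleGraph.compl_adj] at this
      have nbc : ¬G.Adj b c := fun e => ncb e.symm
      have nbd : ¬G.Adj b d := fun e => ndb e.symm
      have hba : G.Adj b a := hab.symm
      tauto
    · rintro ⟨a, b, c, d, hab, hac, had, hbc, hbd, hcd, nab, nac, nad, nbc, nbd, ncd⟩
      have ht : Gᶜ.IsTriangleV b c d := ⟨⟨hbc, nbc⟩, ⟨hbd, nbd⟩, ⟨hcd, ncd⟩⟩
      have := h b c d a ht hab hac had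
      simp only [ExactlyOne, SimpleGraph.compl_adj] at this
      tauto
  · rintro ⟨h1, h2, h3⟩ a b c v ht hva hvb hvc
    obtain ⟨t1, t2, t3⟩ := ht
    rw [SimpleGraph.compl_adj] at t1 t2 t3
    obtain ⟨hab, nab⟩ := t1
    obtain ⟨hac, nac⟩ := t2
    obtain ⟨hbc, nbc⟩ := t3
    simp only [ExactlyOne, SimpleGraph.compl_adj]
    by_cases pa : G.Adj v a <;> by_cases pb : G.Adj v b <;> by_cases pc : G.Adj v c
    · exact absurd ⟨v, a, b, c, pa, pb, pc, hab, hac, hbc, nab, nac, nbc⟩ h1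
    · tauto
    · tauto
    · exact absurd ⟨v, a, b, c, pa, hvb.symm, hab.symm, hvc.symm, hac.symm, hbc,
        nbc, fun e => pb e.symm, fun e => nab e.symm, fun e => pc e.symm,
        fun e => nac e.symm⟩ h2
    · tauto
    · exact absurd ⟨v, b, a, c, pb, hva.symm, hab, hvc.symm, hbc.symm,
        hac, nac, fun e => pa e.symm, nab, fun e => pc e.symm,
        fun e => nbc e.symm⟩ h2
    · exact absurd ⟨v, c, a, b, pc, hva.symm, hac, hvb.symm, hbc,
        hab, nab, fun e => pa e.symm, nac, fun e => pb e.symm, nbc⟩ h2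
    · exact absurd ⟨v, a, b, c, hva, hvb, hvc, hab, hac, hbc, pa, pb, pc, nab, nac, nbc⟩ h3
end

section
/- If (G_1,A_1,B_1,C_1),...,(G_n,A_n,B_n,C_n) is a worn chain decomposition of (G,A,B,C) and each G_i is prismatic, then G is prismatic. -/
private lemma zmod3_one (x y z t : ZMod 3) (hxy : x ≠ y) (hxz : x ≠ z) (hyz : y ≠ z) :
    ExactlyOne (x = t) (y = t) (z = t) := by
  unfold ExactlyOne; revert hxy hxz hyz; revert x y z t; decide

private lemma zmod3_two (x y z t : ZMod 3) (hxy : x ≠ y) (hxz : x ≠ z) (hyz : y ≠ z) :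
    ExactlyOne (t = x + 1) (t = y + 1) (t = z + 1) := by
  unfold ExactlyOne; revert hxy hxz hyz; revert x y z t; decide

private lemma zmod3_succ_ne (a : ZMod 3) : a + 1 ≠ a + 1 + 1 := by
  revert a; decide

/-- If every term of a worn chain decomposition is prismatic, then the whole
graph is prismatic.  `part v` is the index of the term containing `v` and
`color v ∈ ZMod 3` its color (0 = A, 1 = B, 2 = C). -/
theorem stmt15 {V : Type*} (G : SimpleGraph V)
    (part : V → ℕ) (color : V → ZMod 3)
    -- each color class is a stable set
    (hstable : ∀ u v : V, G.Adj u v → color u ≠ color v)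
    -- (W2)
    (hW2 : ∀ u v : V, part u < part v → G.Adj u v → color v = color u + 1)
    -- (W3)
    (hW3 : ∀ u v : V, part u < part v → color v = color u + 1 → ¬G.Adj u v →
      (¬ ∃ x y : V, G.IsTriangleV u x y) ∧ (¬ ∃ x y : V, G.IsTriangleV v x y))
    -- each term (induced subgraph on a part) is prismatic
    (hprime : ∀ x y z v : V, G.IsTriangleV x y z →
      part x = part y → part y = part z → part v = part x →
      v ≠ x → v ≠ y → v ≠ z →
      ExactlyOne (G.Adj v x) (G.Adj v y) (G.Adj v z)) :
    G.Prismatic := by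
  -- In a triangle, no edge goes up in part number.
  have noUp : ∀ x y z : V, G.Adj x y → G.Adj x z → G.Adj y z → ¬ part x < part y := by
    intro x y z hxy hxz hyz hlt
    have hcy : color y = color x + 1 := hW2 x y hlt hxy
    rcases lt_trichotomy (part z) (part x) with h | h | h
    · have h1 : color x = color z + 1 := hW2 z x h hxz.symm
      have h2 : color y = color z + 1 := hW2 z y (h.trans hlt) hyz.symm
      exact hstable x y hxy (h1.trans h2.symm)
    · have hzy : part z < part y := by omega
      have h2 : color y = color z + 1 := hW2 z y hzy hyz.symm
      have : color x = color z := by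
        have := hcy.symm.trans h2
        exact add_right_cancel this
      exact hstable x z hxz this
    · have h1 : color z = color x + 1 := hW2 x z h hxz
      rcases lt_trichotomy (part z) (part y) with h' | h' | h'
      · have h2 : color y = color z + 1 := hW2 z y h' hyz.symm
        exact zmod3_succ_ne (color x) (hcy.symm.trans (h2.trans (by rw [h1])))
      · exact hstable y z hyz (hcy.trans (h1.symm))
      · have h2 : color z = color y + 1 := hW2 y z h' hyz
        exact zmod3_succ_ne (color x) (h1.symm.trans (h2.trans (by rw [hcy])))
  intro a b c v htri hva hvb hvc
  obtain ⟨hab, hac, hbc⟩ := htri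
  have hpab : part a = part b := by
    have h1 := noUp a b c hab hac hbc
    have h2 := noUp b a c hab.symm hbc hac
    omega
  have hpac : part a = part c := by
    have h1 := noUp a c b hac hab hbc.symm
    have h2 := noUp c a b hac.symm hbc.symm hab
    omega
  have hca : color a ≠ color b := hstable a b hab
  have hcb : color a ≠ color c := hstable a c hac
  have hcc : color b ≠ color c := hstable b c hbc
  rcases lt_trichotomy (part v) (part a) with hlt | heq | hgt
  · -- v is in an earlier part
    have key : ∀ x : V, part v < part x → (∃ y z, G.IsTriangleV x y z) →
        (G.Adj v x ↔ color x = color v + 1) := by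
      intro x hx htr
      constructor
      · exact fun h => hW2 v x hx h
      · intro hc
        by_contra hna
        exact (hW3 v x hx hc hna).2 htr
    have iffa := key a hlt ⟨b, c, hab, hac, hbc⟩
    have iffb := key b (by omega) ⟨a, c, hab.symm, hbc, hac⟩
    have iffc := key c (by omega) ⟨a, b, hac.symm, hbc.symm, hab⟩
    rw [iffa, iffb, iffc]
    exact zmod3_one _ _ _ _ hca hcb hcc
  · -- v is in the same part
    exact hprime a b c v ⟨hab, hac, hbc⟩ hpab (by omega) heq hva hvb hvc
  · -- v is in a later part
    have key : ∀ x : V, part x < part v → (∃ y z, G.IsTriangleV x y z) →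
        (G.Adj v x ↔ color v = color x + 1) := by
      intro x hx htr
      constructor
      · exact fun h => hW2 x v hx h.symm
      · intro hc
        by_contra hna
        exact (hW3 x v hx hc (fun h => hna h.symm)).1 htr
    have iffa := key a hgt ⟨b, c, hab, hac, hbc⟩
    have iffb := key b (by omega) ⟨a, c, hab.symm, hbc, hac⟩
    have iffc := key c (by omega) ⟨a, b, hac.symm, hbc.symm, hab⟩
    rw [iffa, iffb, iffc]
    exact zmod3_two _ _ _ _ hca hcb hcc
end

section
/- Let (G,A,B,C) be a 3-colored prismatic graph containing two vertex-disjoint triangles, and let X, Y be two distinct color classes among A, B, C. Then there exist vertices x1, x3 ∈ X and x2 ∈ Y such that x1x2 and x2x3 are edges and x1x3 is not an edge (an induced P3 with ends in X and middle in Y). -/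
lemma triSplit {V : Type*} (G : SimpleGraph V) (X Y Z : Set V)
    (hpart : ∀ v : V, (v ∈ X ∧ v ∉ Y ∧ v ∉ Z) ∨ (v ∉ X ∧ v ∈ Y ∧ v ∉ Z) ∨
      (v ∉ X ∧ v ∉ Y ∧ v ∈ Z))
    (hXs : ∀ u ∈ X, ∀ v ∈ X, ¬G.Adj u v)
    (hYs : ∀ u ∈ Y, ∀ v ∈ Y, ¬G.Adj u v)
    (hZs : ∀ u ∈ Z, ∀ v ∈ Z, ¬G.Adj u v)
    (a b c : V) (h : G.IsTriangleV a b c) :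
    ∃ x y z : V, x ∈ X ∧ y ∈ Y ∧ z ∈ Z ∧ G.IsTriangleV x y z ∧
      x ∈ ({a, b, c} : Set V) ∧ y ∈ ({a, b, c} : Set V) ∧ z ∈ ({a, b, c} : Set V) := by
  obtain ⟨hab, hac, hbc⟩ := h
  have ma : a ∈ ({a, b, c} : Set V) := by simp
  have mb : b ∈ ({a, b, c} : Set V) := by simp
  have mc : c ∈ ({a, b, c} : Set V) := by simp
  rcases hpart a with ⟨ha, -, -⟩ | ⟨-, ha, -⟩ | ⟨-, -, ha⟩ <;>
    rcases hpart b with ⟨hb, -, -⟩ | ⟨-, hb, -⟩ | ⟨-, -, hb⟩ <;>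
    rcases hpart c with ⟨hc, -, -⟩ | ⟨-, hc, -⟩ | ⟨-, -, hc⟩ <;>
  first
  | exact absurd hab (hXs a ‹a ∈ X› b ‹b ∈ X›)
  | exact absurd hab (hYs a ‹a ∈ Y› b ‹b ∈ Y›)
  | exact absurd hab (hZs a ‹a ∈ Z› b ‹b ∈ Z›)
  | exact absurd hac (hXs a ‹a ∈ X› c ‹c ∈ X›)
  | exact absurd hac (hYs a ‹a ∈ Y› c ‹c ∈ Y›)
  | exact absurd hac (hZs a ‹a ∈ Z› c ‹c ∈ Z›)
  | exact absurd hbc (hXs b ‹b ∈ X› c ‹c ∈ X›)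
  | exact absurd hbc (hYs b ‹b ∈ Y› c ‹c ∈ Y›)
  | exact absurd hbc (hZs b ‹b ∈ Z› c ‹c ∈ Z›)
  | exact ⟨a, b, c, ‹_›, ‹_›, ‹_›, ⟨hab, hac, hbc⟩, ma, mb, mc⟩
  | exact ⟨a, c, b, ‹_›, ‹_›, ‹_›, ⟨hac, hab, hbc.symm⟩, ma, mc, mb⟩
  | exact ⟨b, a, c, ‹_›, ‹_›, ‹_›, ⟨hab.symm, hbc, hac⟩, mb, ma, mc⟩
  | exact ⟨b, c, a, ‹_›, ‹_›, ‹_›, ⟨hbc, hab.symm, hac.symm⟩, mb, mc, ma⟩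
  | exact ⟨c, a, b, ‹_›, ‹_›, ‹_›, ⟨hac.symm, hbc.symm, hab⟩, mc, ma, mb⟩
  | exact ⟨c, b, a, ‹_›, ‹_›, ‹_›, ⟨hbc.symm, hac.symm, hab.symm⟩, mc, mb, ma⟩

lemma keyLemma {V : Type*} (G : SimpleGraph V) (hG : G.Prismatic)
    (X Y Z : Set V)
    (hpart : ∀ v : V, (v ∈ X ∧ v ∉ Y ∧ v ∉ Z) ∨ (v ∉ X ∧ v ∈ Y ∧ v ∉ Z) ∨
      (v ∉ X ∧ v ∉ Y ∧ v ∈ Z))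
    (hXs : ∀ u ∈ X, ∀ v ∈ X, ¬G.Adj u v)
    (hYs : ∀ u ∈ Y, ∀ v ∈ Y, ¬G.Adj u v)
    (hZs : ∀ u ∈ Z, ∀ v ∈ Z, ¬G.Adj u v)
    (htwo : ∃ a b c d e f : V, G.IsTriangleV a b c ∧ G.IsTriangleV d e f ∧
      ({a, b, c} : Set V) ∩ ({d, e, f} : Set V) = ∅) :
    ∃ x1 x2 x3 : V, x1 ∈ X ∧ x3 ∈ X ∧ x2 ∈ Y ∧ x1 ≠ x3 ∧
      G.Adj x1 x2 ∧ G.Adj x2 x3 ∧ ¬G.Adj x1 x3 := by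
  obtain ⟨a, b, c, d, e, f, h1, h2, hdisj⟩ := htwo
  obtain ⟨x, y, z, hxX, hyY, hzZ, ht1, hxm, hym, hzm⟩ :=
    triSplit G X Y Z hpart hXs hYs hZs a b c h1
  obtain ⟨x', y', z', hx'X, hy'Y, hz'Z, ht2, hx'm, hy'm, hz'm⟩ :=
    triSplit G X Y Z hpart hXs hYs hZs d e f h2
  have hne : ∀ p ∈ ({a, b, c} : Set V), ∀ q ∈ ({d, e, f} : Set V), p ≠ q := by
    intro p hp q hq hpq
    subst hpq
    have : p ∈ ({a, b, c} : Set V) ∩ ({d, e, f} : Set V) := ⟨hp, hq⟩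
    rw [hdisj] at this
    exact this
  by_cases hcase1 : G.Adj y x'
  · exact ⟨x, y, x', hxX, hx'X, hyY, hne x hxm x' hx'm, ht1.1, hcase1,
      hXs x hxX x' hx'X⟩
  by_cases hcase2 : G.Adj y' x
  · exact ⟨x', y', x, hx'X, hxX, hy'Y, (hne x hxm x' hx'm).symm, ht2.1, hcase2,
      hXs x' hx'X x hxX⟩
  -- Now derive a contradiction
  exfalso
  have hx'z : G.Adj x' z := by
    rcases hG x y z x' ht1 (hne x hxm x' hx'm).symm (hne y hym x' hx'm).symm
        (hne z hzm x' hx'm).symm with ⟨h, -, -⟩ | ⟨-, h, -⟩ | ⟨-, -, h⟩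
    · exact absurd h (hXs x' hx'X x hxX)
    · exact absurd h.symm hcase1
    · exact h
  have hy'z : G.Adj y' z := by
    rcases hG x y z y' ht1 (hne x hxm y' hy'm).symm (hne y hym y' hy'm).symm
        (hne z hzm y' hy'm).symm with ⟨h, -, -⟩ | ⟨-, h, -⟩ | ⟨-, -, h⟩
    · exact absurd h hcase2
    · exact absurd h (hYs y' hy'Y y hyY)
    · exact h
  rcases hG x' y' z' z ht2 (hne z hzm x' hx'm) (hne z hzm y' hy'm)
      (hne z hzm z' hz'm) with ⟨-, h, -⟩ | ⟨h, -, -⟩ | ⟨h, -, -⟩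
  · exact h hy'z.symm
  · exact h hx'z.symm
  · exact h hx'z.symm

/-- In a 3-colored prismatic graph with two vertex-disjoint triangles, for any
two distinct color classes X, Y there is an induced P3 with both ends in X and
middle in Y. -/
theorem stmt16 {V : Type*} (G : SimpleGraph V) (hG : G.Prismatic)
    (A B C : Set V)
    (hpart : ∀ v : V, (v ∈ A ∧ v ∉ B ∧ v ∉ C) ∨ (v ∉ A ∧ v ∈ B ∧ v ∉ C) ∨
      (v ∉ A ∧ v ∉ B ∧ v ∈ C))
    (hAstable : ∀ u ∈ A, ∀ v ∈ A, ¬G.Adj u v)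
    (hBstable : ∀ u ∈ B, ∀ v ∈ B, ¬G.Adj u v)
    (hCstable : ∀ u ∈ C, ∀ v ∈ C, ¬G.Adj u v)
    (htwo : ∃ a b c d e f : V, G.IsTriangleV a b c ∧ G.IsTriangleV d e f ∧
      ({a, b, c} : Set V) ∩ ({d, e, f} : Set V) = ∅)
    (X Y : Set V) (hX : X = A ∨ X = B ∨ X = C) (hY : Y = A ∨ Y = B ∨ Y = C)
    (hXY : X ≠ Y) :
    ∃ x1 x2 x3 : V, x1 ∈ X ∧ x3 ∈ X ∧ x2 ∈ Y ∧ x1 ≠ x3 ∧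
      G.Adj x1 x2 ∧ G.Adj x2 x3 ∧ ¬G.Adj x1 x3 := by
  rcases hX with rfl | rfl | rfl <;> rcases hY with rfl | rfl | rfl
  · exact absurd rfl hXY
  · -- X = A, Y = B, Z = C
    exact keyLemma G hG X Y C hpart hAstable hBstable hCstable htwo
  · -- X = A, Y = C, Z = B
    refine keyLemma G hG X Y B (fun v => ?_) hAstable hCstable hBstable htwo
    rcases hpart v with ⟨h1, h2, h3⟩ | ⟨h1, h2, h3⟩ | ⟨h1, h2, h3⟩
    exacts [Or.inl ⟨h1, h3, h2⟩, Or.inr (Or.inr ⟨h1, h3, h2⟩),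
      Or.inr (Or.inl ⟨h1, h3, h2⟩)]
  · -- X = B, Y = A, Z = C
    refine keyLemma G hG X Y C (fun v => ?_) hBstable hAstable hCstable htwo
    rcases hpart v with ⟨h1, h2, h3⟩ | ⟨h1, h2, h3⟩ | ⟨h1, h2, h3⟩
    exacts [Or.inr (Or.inl ⟨h2, h1, h3⟩), Or.inl ⟨h2, h1, h3⟩,
      Or.inr (Or.inr ⟨h2, h1, h3⟩)]
  · exact absurd rfl hXY
  · -- X = B, Y = C, Z = A
    refine keyLemma G hG X Y A (fun v => ?_) hBstable hCstable hAstable htwo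
    rcases hpart v with ⟨h1, h2, h3⟩ | ⟨h1, h2, h3⟩ | ⟨h1, h2, h3⟩
    exacts [Or.inr (Or.inr ⟨h2, h3, h1⟩), Or.inl ⟨h2, h3, h1⟩,
      Or.inr (Or.inl ⟨h2, h3, h1⟩)]
  · -- X = C, Y = A, Z = B
    refine keyLemma G hG X Y B (fun v => ?_) hCstable hAstable hBstable htwo
    rcases hpart v with ⟨h1, h2, h3⟩ | ⟨h1, h2, h3⟩ | ⟨h1, h2, h3⟩
    exacts [Or.inr (Or.inl ⟨h3, h1, h2⟩), Or.inr (Or.inr ⟨h3, h1, h2⟩),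
      Or.inl ⟨h3, h1, h2⟩]
  · -- X = C, Y = B, Z = A
    refine keyLemma G hG X Y A (fun v => ?_) hCstable hBstable hAstable htwo
    rcases hpart v with ⟨h1, h2, h3⟩ | ⟨h1, h2, h3⟩ | ⟨h1, h2, h3⟩
    exacts [Or.inr (Or.inr ⟨h3, h2, h1⟩), Or.inr (Or.inl ⟨h3, h2, h1⟩),
      Or.inl ⟨h3, h2, h1⟩]
  · exact absurd rfl hXY
end
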